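/- arXiv:2605.30286 — 3 statements merged into one kernel-verified Lean document; each statement's English description precedes it below -/
import Mathlib

section
/- Let T₁, T₂ be topological vector spaces, S ⊆ T₁ × T₂ convex, and y ∈ T₂ such that there exists x ∈ T₁ with (x, y) ∈ interior S. Then {x : (x,y) ∈ interior S} = interior {x : (x,y) ∈ S}, where the interior on the right is taken in T₁. -/
/-!
The slice is the preimage of `S` under the continuous affine map `x ↦ (x, y)`. If `x` is interior
to the slice, moving a little beyond `x` along the ray from `x₀` stays in the slice, so `(x, y)`
lies on an open segment from the interior point `(x₀, y)` to a point of `S`, and is therefore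
interior to `S` by convexity.
-/

open Topology

theorem exists_mem_openSegment_of_mem_interior {E : Type*} [AddCommGroup E] [Module ℝ E]
    [TopologicalSpace E] [IsTopologicalAddGroup E] [ContinuousSMul ℝ E] {A : Set E} {x : E}
    (hx : x ∈ interior A) (x₀ : E) : ∃ z ∈ A, x ∈ openSegment ℝ x₀ z := by
  have h_near_one : ∀ᶠ t in 𝓝[>] (1 : ℝ), AffineMap.lineMap x₀ x t ∈ A := by
    refine nhdsWithin_le_nhds (AffineMap.lineMap_continuous.continuousAt.preimage_mem_nhds ?_)
    simpa using mem_interior_iff_mem_nhds.mp hx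
  obtain ⟨t, htA, ht⟩ := (h_near_one.and self_mem_nhdsWithin).exists
  have ht₀ : (0 : ℝ) < t := zero_lt_one.trans ht
  refine ⟨_, htA, ?_⟩
  convert lineMap_mem_openSegment ℝ x₀ (AffineMap.lineMap x₀ x t)
    ⟨inv_pos.mpr ht₀, inv_lt_one_of_one_lt₀ ht⟩
  rw [AffineMap.lineMap_lineMap_right, inv_mul_cancel₀ ht₀.ne', AffineMap.lineMap_apply_one]

theorem Convex.preimage_interior_eq_interior_preimage {E F : Type*}
    [AddCommGroup E] [Module ℝ E] [TopologicalSpace E] [IsTopologicalAddGroup E]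
    [ContinuousConstSMul ℝ E]
    [AddCommGroup F] [Module ℝ F] [TopologicalSpace F] [IsTopologicalAddGroup F]
    [ContinuousSMul ℝ F]
    {S : Set E} (hS : Convex ℝ S) (f : F →ᴬ[ℝ] E) (h : ∃ x₀, f x₀ ∈ interior S) :
    f ⁻¹' interior S = interior (f ⁻¹' S) := by
  obtain ⟨x₀, hx₀⟩ := h
  refine (preimage_interior_subset_interior_preimage f.continuous).antisymm fun x hx => ?_
  obtain ⟨z, hz, hxz⟩ := exists_mem_openSegment_of_mem_interior hx x₀
  have hfx : f x ∈ openSegment ℝ (f x₀) (f z) :=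
    (image_openSegment ℝ (f : F →ᵃ[ℝ] E) x₀ z).subset (Set.mem_image_of_mem _ hxz)
  exact hS.openSegment_interior_self_subset_interior hx₀ hz hfx

theorem slice_interior_eq_interior_slice {T₁ T₂ : Type*}
    [AddCommGroup T₁] [Module ℝ T₁] [TopologicalSpace T₁] [IsTopologicalAddGroup T₁]
    [ContinuousSMul ℝ T₁]
    [AddCommGroup T₂] [Module ℝ T₂] [TopologicalSpace T₂] [IsTopologicalAddGroup T₂]
    [ContinuousSMul ℝ T₂]
    (S : Set (T₁ × T₂)) (hS : Convex ℝ S) (y : T₂)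
    (hx : ∃ x : T₁, (x, y) ∈ interior S) :
    {x : T₁ | (x, y) ∈ interior S} = interior {x : T₁ | (x, y) ∈ S} :=
  hS.preimage_interior_eq_interior_preimage
    ((ContinuousAffineMap.id ℝ T₁).prod (ContinuousAffineMap.const ℝ T₁ y)) hx
end

section
/- Let H be a convex cone in topological vector space Y, and suppose every Henig dilating cone of C contained in a fixed dilating cone 𝓗 is also a dilating cone. Then the set of Henig-properly efficient points of f on S w.r.t. C equals the union of Eff(f, S, H ∩ 𝓗) over all Henig dilating cones H of C, where 𝓗 is any fixed Henig dilating cone of C. -/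
/- The union over `H` of `Eff(f, S, H ∩ 𝓗)` contains every `Eff(f, S, H)` because efficiency is
antitone in the ordering cone, and is contained in `PEff` because `H ∩ 𝓗` is again a dilating
cone. -/

/-- `H` is a Henig dilating cone of `C`. -/
def IsDilatingCone {Y : Type*} [AddCommGroup Y] [Module ℝ Y] [TopologicalSpace Y]
    (C H : Set Y) : Prop :=
  Convex ℝ H ∧ (∀ c ∈ H, ∀ t : ℝ, 0 ≤ t → t • c ∈ H) ∧ C \ {0} ⊆ interior H

section

variable {X Y : Type*} [AddCommGroup Y]

def eff (f : X → Y) (S : Set X) (K : Set Y) : Set X :=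
  {x | x ∈ S ∧ ∀ y ∈ S, f y - f x ∈ -K → f y - f x = 0}

theorem eff_anti {f : X → Y} {S : Set X} {H K : Set Y} (hKH : K ⊆ H) :
    eff f S H ⊆ eff f S K :=
  fun _ ⟨hxS, heff⟩ => ⟨hxS, fun y hy hyK => heff y hy (Set.neg_subset_neg.mpr hKH hyK)⟩

theorem IsDilatingCone.inter [Module ℝ Y] [TopologicalSpace Y] {C H K : Set Y}
    (hH : IsDilatingCone C H) (hK : IsDilatingCone C K) : IsDilatingCone C (H ∩ K) := by
  obtain ⟨hHconv, hHcone, hHint⟩ := hH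
  obtain ⟨hKconv, hKcone, hKint⟩ := hK
  refine ⟨hHconv.inter hKconv, fun c hc t ht => ⟨hHcone c hc.1 t ht, hKcone c hc.2 t ht⟩, ?_⟩
  rw [interior_inter]
  exact Set.subset_inter hHint hKint

end

theorem pEffHenig_eq_union_eff_inter_general {X Y : Type*}
    [AddCommGroup Y] [Module ℝ Y] [TopologicalSpace Y]
    (S : Set X) (f : X → Y) (C 𝓗 : Set Y)
    (h𝓗 : IsDilatingCone C 𝓗) :
    {x | x ∈ S ∧ ∃ H : Set Y, IsDilatingCone C H ∧
        ∀ y ∈ S, f y - f x ∈ -H → f y - f x = 0} =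
      ⋃ H ∈ {H : Set Y | IsDilatingCone C H},
        {x | x ∈ S ∧ ∀ y ∈ S, f y - f x ∈ -(H ∩ 𝓗) → f y - f x = 0} := by
  ext x
  simp only [Set.mem_ofPred_eq, Set.mem_iUnion]
  constructor
  · rintro ⟨hxS, H, hH, heff⟩
    exact ⟨H, hH, eff_anti Set.inter_subset_left ⟨hxS, heff⟩⟩
  · rintro ⟨H, hH, hxS, heff⟩
    exact ⟨hxS, H ∩ 𝓗, hH.inter h𝓗, heff⟩

theorem pEffHenig_eq_union_eff_inter {X Y : Type*}
    [AddCommGroup Y] [Module ℝ Y] [TopologicalSpace Y] [IsTopologicalAddGroup Y]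
    [ContinuousSMul ℝ Y]
    (D S : Set X) (f : X → Y) (C 𝓗 : Set Y)
    (hSne : S.Nonempty) (hSD : S ⊆ D)
    (hCne : C ≠ {0}) (hC0 : (0 : Y) ∈ C) (hCconv : Convex ℝ C)
    (hCcone : ∀ c ∈ C, ∀ t : ℝ, 0 ≤ t → t • c ∈ C)
    (hCpointed : C ∩ (-C) ⊆ {0})
    (h𝓗 : IsDilatingCone C 𝓗)
    (hsub : ∀ H : Set Y, IsDilatingCone C H → H ⊆ 𝓗 → IsDilatingCone C H) :
    {x | x ∈ S ∧ ∃ H : Set Y, IsDilatingCone C H ∧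
        ∀ y ∈ S, f y - f x ∈ -H → f y - f x = 0} =
      ⋃ H ∈ {H : Set Y | IsDilatingCone C H},
        {x | x ∈ S ∧ ∀ y ∈ S, f y - f x ∈ -(H ∩ 𝓗) → f y - f x = 0} :=
  pEffHenig_eq_union_eff_inter_general S f C 𝓗 h𝓗
end

section
/- Let C ⊆ Y be a nontrivial pointed convex cone, H a convex cone with C \ {0} ⊆ interior H, and h ∈ interior H. Then H⊗_h := {(v,t) ∈ Y × ℝ : v + t•h ∈ H} is a Henig dilating cone of C × [0,∞) in Y × ℝ; i.e., H⊗_h is a convex cone and (C × [0,∞)) \ {(0,0)} ⊆ interior(H⊗_h). -/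
/-! The set `{(v, t) | v + t • h ∈ H}` is the preimage of `H` under the continuous linear map
`(v, t) ↦ v + t • h`, so it is a convex cone, and it contains the preimage of `interior H` in its
interior. For `(c, t) ∈ C × [0, ∞)` other than `(0, 0)` the image `c + t • h` lies in `interior H`:
if `t = 0` then `c ∈ C \ {0}`, and if `t > 0` then `t • h ∈ interior H`, and adding an element of
the convex cone `H` to an interior point keeps it interior. -/

open Set

section ConvexCone

open Pointwise

variable {E : Type*} [AddCommGroup E] [Module ℝ E] [TopologicalSpace E] {H : Set E}

lemma smul_mem_interior_of_smul_mem [ContinuousConstSMul ℝ E]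
    (hHcone : ∀ x ∈ H, ∀ t : ℝ, 0 ≤ t → t • x ∈ H) {t : ℝ} (ht : 0 < t) {x : E}
    (hx : x ∈ interior H) : t • x ∈ interior H := by
  have hsmul : t • H ⊆ H := by
    rintro _ ⟨y, hy, rfl⟩
    exact hHcone y hy t ht.le
  exact interior_mono hsmul (by rw [interior_smul₀ ht.ne']; exact smul_mem_smul_set hx)

lemma add_mem_interior_of_convex_of_smul_mem [IsTopologicalAddGroup E] [ContinuousSMul ℝ E]
    (hHconv : Convex ℝ H) (hHcone : ∀ x ∈ H, ∀ t : ℝ, 0 ≤ t → t • x ∈ H) {x y : E}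
    (hx : x ∈ interior H) (hy : y ∈ H) : x + y ∈ interior H := by
  have hmid : (1 / 2 : ℝ) • x + (1 / 2 : ℝ) • y ∈ interior H :=
    hHconv.combo_interior_self_mem_interior hx hy (by norm_num) (by norm_num) (by norm_num)
  have hdouble : (2 : ℝ) • ((1 / 2 : ℝ) • x + (1 / 2 : ℝ) • y) = x + y := by module
  rw [← hdouble]
  exact smul_mem_interior_of_smul_mem hHcone two_pos hmid

end ConvexCone

section Extension

variable {Y : Type*} [AddCommGroup Y] [Module ℝ Y] {H : Set Y}

lemma convex_setOf_add_smul_mem (hHconv : Convex ℝ H) (h : Y) :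
    Convex ℝ {p : Y × ℝ | p.1 + p.2 • h ∈ H} :=
  hHconv.linear_preimage (LinearMap.fst ℝ Y ℝ + (LinearMap.snd ℝ Y ℝ).smulRight h)

lemma smul_mem_setOf_add_smul_mem (hHcone : ∀ x ∈ H, ∀ t : ℝ, 0 ≤ t → t • x ∈ H) (h : Y)
    {p : Y × ℝ} (hp : p ∈ {p : Y × ℝ | p.1 + p.2 • h ∈ H}) {t : ℝ} (ht : 0 ≤ t) :
    t • p ∈ {p : Y × ℝ | p.1 + p.2 • h ∈ H} := by
  have hmap : (t • p).1 + (t • p).2 • h = t • (p.1 + p.2 • h) := by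
    simp only [Prod.smul_fst, Prod.smul_snd, smul_eq_mul, smul_add, smul_smul]
  show (t • p).1 + (t • p).2 • h ∈ H
  rw [hmap]
  exact hHcone _ hp t ht

lemma mem_interior_setOf_add_smul_mem [TopologicalSpace Y] [IsTopologicalAddGroup Y]
    [ContinuousSMul ℝ Y] (h : Y) {p : Y × ℝ} (hp : p.1 + p.2 • h ∈ interior H) :
    p ∈ interior {p : Y × ℝ | p.1 + p.2 • h ∈ H} :=
  preimage_interior_subset_interior_preimage
    (continuous_fst.add (continuous_snd.smul continuous_const)) hp

end Extension

theorem extended_cone_is_dilating_general {Y : Type*}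
    [AddCommGroup Y] [Module ℝ Y] [TopologicalSpace Y] [IsTopologicalAddGroup Y]
    [ContinuousSMul ℝ Y]
    (C H : Set Y)
    (hHconv : Convex ℝ H) (hHcone : ∀ c ∈ H, ∀ t : ℝ, 0 ≤ t → t • c ∈ H)
    (hHdil : C \ {0} ⊆ interior H) (h : Y) (hh : h ∈ interior H) :
    Convex ℝ {p : Y × ℝ | p.1 + p.2 • h ∈ H} ∧
      (∀ p ∈ {p : Y × ℝ | p.1 + p.2 • h ∈ H}, ∀ t : ℝ, 0 ≤ t →
        t • p ∈ {p : Y × ℝ | p.1 + p.2 • h ∈ H}) ∧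
      (C ×ˢ Set.Ici (0 : ℝ)) \ {(0, 0)} ⊆ interior {p : Y × ℝ | p.1 + p.2 • h ∈ H} := by
  refine ⟨convex_setOf_add_smul_mem hHconv h,
    fun p hp t ht => smul_mem_setOf_add_smul_mem hHcone h hp ht, ?_⟩
  rintro ⟨c, t⟩ ⟨⟨hc, ht⟩, hne⟩
  apply mem_interior_setOf_add_smul_mem
  rcases (mem_Ici.mp ht).eq_or_lt with rfl | htpos
  · have hc0 : c ≠ 0 := by rintro rfl; exact hne rfl
    simpa using hHdil ⟨hc, hc0⟩
  · have hth : t • h ∈ interior H := smul_mem_interior_of_smul_mem hHcone htpos hh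
    by_cases hc0 : c = 0
    · simpa [hc0] using hth
    · rw [add_comm]
      exact add_mem_interior_of_convex_of_smul_mem hHconv hHcone hth
        (interior_subset (hHdil ⟨hc, hc0⟩))

theorem extended_cone_is_dilating {Y : Type*}
    [AddCommGroup Y] [Module ℝ Y] [TopologicalSpace Y] [IsTopologicalAddGroup Y]
    [ContinuousSMul ℝ Y]
    (C H : Set Y)
    (hCne : C ≠ {0}) (hC0 : (0 : Y) ∈ C) (hCconv : Convex ℝ C)
    (hCcone : ∀ c ∈ C, ∀ t : ℝ, 0 ≤ t → t • c ∈ C)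
    (hCpointed : C ∩ (-C) ⊆ {0})
    (hHconv : Convex ℝ H) (hHcone : ∀ c ∈ H, ∀ t : ℝ, 0 ≤ t → t • c ∈ H)
    (hHdil : C \ {0} ⊆ interior H) (h : Y) (hh : h ∈ interior H) :
    Convex ℝ {p : Y × ℝ | p.1 + p.2 • h ∈ H} ∧
      (∀ p ∈ {p : Y × ℝ | p.1 + p.2 • h ∈ H}, ∀ t : ℝ, 0 ≤ t →
        t • p ∈ {p : Y × ℝ | p.1 + p.2 • h ∈ H}) ∧
      (C ×ˢ Set.Ici (0 : ℝ)) \ {(0, 0)} ⊆ interior {p : Y × ℝ | p.1 + p.2 • h ∈ H} :=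
  extended_cone_is_dilating_general C H hHconv hHcone hHdil h hh
end
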